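/- Let P and R be probability measures on a measurable space Ω with H(P|R) < ∞. Then the function f : [0, 1] → [0, ∞) defined by f(x) := H(x·P + (1−x)·R | R) is finite at every x ∈ [0, 1], convex, continuous on [0, 1], and nondecreasing. -/

import Mathlib

/-! With `g = dP/dR`, the mixture `x • P + (1 - x) • R` has density `x g + 1 - x` with respect to
`R`. Since all measures involved have mass one, `H(μ|R) = ∫ φ(dμ/dR) dR` with
`φ(t) = t log t + 1 - t` (`klFun`), so `f(x) = ∫ φ(x g + 1 - x) dR`. Convexity of `φ` and
`φ ≥ 0 = φ(1)` give `φ(x g + 1 - x) ≤ x φ(g) ≤ φ(g)`, an integrable bound since `H(P|R) < ∞`: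
this yields finiteness and, by dominated convergence, continuity. Convexity of `f` is inherited
pointwise from `φ`, and a convex function on `[0, 1]` minimal at `0` (`f 0 = 0 ≤ f`) is
nondecreasing. -/

open MeasureTheory Real Filter Classical
open scoped ENNReal

/-- Relative entropy `H(P|Q) ∈ [0,∞]`: the integral `∫ log(dP/dQ) dP` if `P ≪ Q`
(with value `+∞` when `log(dP/dQ)` is not `P`-integrable), and `+∞` otherwise. -/
noncomputable def relEntropy {Ω : Type*} [MeasurableSpace Ω] (P Q : Measure Ω) : EReal :=
  if P ≪ Q ∧ Integrable (llr P Q) P then ((∫ ω, llr P Q ω ∂P : ℝ) : EReal) else ⊤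

open InformationTheory Set

theorem ConvexOn.monotoneOn_of_isMinOn_left {𝕜 β : Type*} [Field 𝕜] [LinearOrder 𝕜]
    [IsStrictOrderedRing 𝕜] [AddCommMonoid β] [LinearOrder β] [IsOrderedCancelAddMonoid β]
    [Module 𝕜 β] [PosSMulStrictMono 𝕜 β] {f : 𝕜 → β} {a b : 𝕜}
    (hf : ConvexOn 𝕜 (Icc a b) f) (hmin : IsMinOn f (Icc a b) a) :
    MonotoneOn f (Icc a b) := by
  intro x hx y hy hxy
  rcases hx.1.eq_or_lt with rfl | hax
  · exact hmin hy
  · exact hf.le_right_of_left_le'' (left_mem_Icc.2 (hax.le.trans hx.2)) hy hax hxy (hmin hx)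

lemma mul_add_one_sub_nonneg {t x : ℝ} (ht : 0 ≤ t) (hx : x ∈ Icc (0 : ℝ) 1) :
    0 ≤ x * t + (1 - x) :=
  add_nonneg (mul_nonneg hx.1 ht) (sub_nonneg.2 hx.2)

lemma klFun_mul_add_one_sub_le {t x : ℝ} (ht : 0 ≤ t) (hx : x ∈ Icc (0 : ℝ) 1) :
    klFun (x * t + (1 - x)) ≤ klFun t :=
  calc klFun (x * t + (1 - x)) ≤ x * klFun t + (1 - x) * klFun 1 := by
        simpa using convexOn_klFun.2 (mem_Ici.2 ht) (mem_Ici.2 zero_le_one) hx.1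
          (sub_nonneg.2 hx.2) (by ring)
    _ ≤ klFun t := by
        rw [klFun_one, mul_zero, add_zero]
        exact mul_le_of_le_one_left (klFun_nonneg ht) hx.2

section KlFunMixture

variable {Ω : Type*} [MeasurableSpace Ω] {R : Measure Ω} {g : Ω → ℝ}

noncomputable def integralKlFunMixture (R : Measure Ω) (g : Ω → ℝ) (x : ℝ) : ℝ :=
  ∫ ω, klFun (x * g ω + (1 - x)) ∂ R

lemma integrable_klFun_mixture (hg : Measurable g) (hg0 : 0 ≤ g)
    (hint : Integrable (fun ω ↦ klFun (g ω)) R) {x : ℝ} (hx : x ∈ Icc (0 : ℝ) 1) :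
    Integrable (fun ω ↦ klFun (x * g ω + (1 - x))) R := by
  refine hint.mono' (by fun_prop) (ae_of_all _ fun ω ↦ ?_)
  rw [Real.norm_of_nonneg (klFun_nonneg (mul_add_one_sub_nonneg (hg0 ω) hx))]
  exact klFun_mul_add_one_sub_le (hg0 ω) hx

variable (hg : Measurable g) (hg0 : 0 ≤ g) (hint : Integrable (fun ω ↦ klFun (g ω)) R)
include hg hg0 hint

lemma convexOn_integralKlFunMixture : ConvexOn ℝ (Icc 0 1) (integralKlFunMixture R g) := by
  refine ⟨convex_Icc 0 1, fun a ha b hb s t hs ht hst ↦ ?_⟩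
  have hint_a := integrable_klFun_mixture hg hg0 hint ha
  have hint_b := integrable_klFun_mixture hg hg0 hint hb
  have hpointwise : ∀ ω, klFun ((s * a + t * b) * g ω + (1 - (s * a + t * b)))
      ≤ s * klFun (a * g ω + (1 - a)) + t * klFun (b * g ω + (1 - b)) := by
    intro ω
    have h := convexOn_klFun.2 (mul_add_one_sub_nonneg (hg0 ω) ha)
      (mul_add_one_sub_nonneg (hg0 ω) hb) hs ht hst
    rw [smul_eq_mul, smul_eq_mul, smul_eq_mul, smul_eq_mul] at h
    have harg : (s * a + t * b) * g ω + (1 - (s * a + t * b))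
        = s * (a * g ω + (1 - a)) + t * (b * g ω + (1 - b)) := by
      rw [eq_sub_of_add_eq hst]; ring
    rwa [harg]
  simp only [integralKlFunMixture, smul_eq_mul]
  calc ∫ ω, klFun ((s * a + t * b) * g ω + (1 - (s * a + t * b))) ∂ R
      ≤ ∫ ω, (s * klFun (a * g ω + (1 - a)) + t * klFun (b * g ω + (1 - b))) ∂ R :=
        integral_mono (integrable_klFun_mixture hg hg0 hint
          ((convex_Icc 0 1) ha hb hs ht hst)) ((hint_a.const_mul s).add (hint_b.const_mul t))
          hpointwise
    _ = _ := by rw [integral_add (hint_a.const_mul s) (hint_b.const_mul t),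
          integral_const_mul, integral_const_mul]

lemma continuousOn_integralKlFunMixture :
    ContinuousOn (integralKlFunMixture R g) (Icc 0 1) :=
  continuousOn_of_dominated (fun _ _ ↦ by fun_prop)
    (fun x hx ↦ ae_of_all _ fun ω ↦ by
      rw [Real.norm_of_nonneg (klFun_nonneg (mul_add_one_sub_nonneg (hg0 ω) hx))]
      exact klFun_mul_add_one_sub_le (hg0 ω) hx)
    hint (ae_of_all _ fun ω ↦ by fun_prop)

lemma monotoneOn_integralKlFunMixture :
    MonotoneOn (integralKlFunMixture R g) (Icc 0 1) := by
  refine (convexOn_integralKlFunMixture hg hg0 hint).monotoneOn_of_isMinOn_left fun x hx ↦ ?_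
  simp only [integralKlFunMixture, mem_ofPred_eq, zero_mul, sub_zero, zero_add, klFun_one,
    integral_zero]
  exact integral_nonneg fun ω ↦ klFun_nonneg (mul_add_one_sub_nonneg (hg0 ω) hx)

end KlFunMixture

section Mixture

variable {Ω : Type*} [MeasurableSpace Ω]

lemma relEntropy_ne_top_iff {μ ν : Measure Ω} :
    relEntropy μ ν ≠ ⊤ ↔ μ ≪ ν ∧ Integrable (llr μ ν) μ := by
  unfold relEntropy
  split_ifs with h <;> simp [h]

lemma relEntropy_eq_klDiv {μ ν : Measure Ω} [IsFiniteMeasure μ] [IsFiniteMeasure ν]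
    (h : μ univ = ν univ) : relEntropy μ ν = klDiv μ ν := by
  by_cases hfin : μ ≪ ν ∧ Integrable (llr μ ν) μ
  · rw [relEntropy, if_pos hfin, klDiv_of_ac_of_integrable hfin.1 hfin.2, measureReal_def,
      measureReal_def, h, add_sub_cancel_right, EReal.coe_ennreal_ofReal,
      max_eq_left (by simpa [measureReal_def, h] using
        integral_llr_add_sub_measure_univ_nonneg hfin.1 hfin.2)]
  · rw [relEntropy, if_neg hfin,
      EReal.coe_ennreal_eq_top_iff.2 (klDiv_ne_top_iff.not_right.2 hfin)]

noncomputable def mixture (x : ℝ) (P R : Measure Ω) : Measure Ω :=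
  ENNReal.ofReal x • P + ENNReal.ofReal (1 - x) • R

variable {P R : Measure Ω} {x : ℝ}

instance [IsFiniteMeasure P] [IsFiniteMeasure R] : IsFiniteMeasure (mixture x P R) := by
  have := P.smul_finite (ENNReal.ofReal_ne_top (r := x))
  have := R.smul_finite (ENNReal.ofReal_ne_top (r := 1 - x))
  unfold mixture
  infer_instance

lemma mixture_absolutelyContinuous (hPR : P ≪ R) : mixture x P R ≪ R :=
  .add_left (.smul_left hPR _) Measure.smul_absolutelyContinuous

lemma mixture_apply_univ [IsProbabilityMeasure P] [IsProbabilityMeasure R]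
    (hx : x ∈ Icc (0 : ℝ) 1) : mixture x P R univ = 1 := by
  simp [mixture, ← ENNReal.ofReal_add hx.1 (sub_nonneg.2 hx.2)]

lemma toReal_rnDeriv_mixture [IsFiniteMeasure P] [IsFiniteMeasure R] (hx : x ∈ Icc (0 : ℝ) 1) :
    ∀ᵐ ω ∂ R, ((mixture x P R).rnDeriv R ω).toReal = x * (P.rnDeriv R ω).toReal + (1 - x) := by
  have := P.smul_finite (ENNReal.ofReal_ne_top (r := x))
  have := R.smul_finite (ENNReal.ofReal_ne_top (r := 1 - x))
  filter_upwards [Measure.rnDeriv_add' (ENNReal.ofReal x • P) (ENNReal.ofReal (1 - x) • R) R,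
    Measure.rnDeriv_smul_left_of_ne_top' P R ENNReal.ofReal_ne_top,
    Measure.rnDeriv_smul_left_of_ne_top' R R ENNReal.ofReal_ne_top,
    Measure.rnDeriv_self R, Measure.rnDeriv_lt_top P R] with ω hadd hP hR hself hlt
  rw [mixture, hadd, Pi.add_apply, hP, hR, Pi.smul_apply, Pi.smul_apply, hself, smul_eq_mul,
    smul_eq_mul, mul_one, ENNReal.toReal_add (by finiteness) ENNReal.ofReal_ne_top,
    ENNReal.toReal_mul, ENNReal.toReal_ofReal hx.1, ENNReal.toReal_ofReal (sub_nonneg.2 hx.2)]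

variable [IsProbabilityMeasure P] [IsProbabilityMeasure R]

lemma toReal_relEntropy_mixture (hPR : P ≪ R) (hx : x ∈ Icc (0 : ℝ) 1) :
    (relEntropy (mixture x P R) R).toReal
      = integralKlFunMixture R (fun ω ↦ (P.rnDeriv R ω).toReal) x := by
  rw [relEntropy_eq_klDiv (by rw [mixture_apply_univ hx, measure_univ]),
    EReal.toReal_coe_ennreal, toReal_klDiv_eq_integral_klFun (mixture_absolutelyContinuous hPR)]
  exact integral_congr_ae ((toReal_rnDeriv_mixture (P := P) hx).mono fun _ h ↦ congrArg klFun h)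

lemma relEntropy_mixture_ne_top (hPR : P ≪ R)
    (hint : Integrable (fun ω ↦ klFun (P.rnDeriv R ω).toReal) R) (hx : x ∈ Icc (0 : ℝ) 1) :
    relEntropy (mixture x P R) R ≠ ⊤ := by
  have hac := mixture_absolutelyContinuous (x := x) hPR
  refine relEntropy_ne_top_iff.2 ⟨hac, (integrable_klFun_rnDeriv_iff hac).1 ?_⟩
  refine (integrable_klFun_mixture (by fun_prop) (fun _ ↦ ENNReal.toReal_nonneg) hint hx).congr ?_
  exact (toReal_rnDeriv_mixture (P := P) hx).mono fun _ h ↦ (congrArg klFun h).symm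

end Mixture

/-- For probability measures `P, R` with `H(P|R) < ∞`, the function
`f(x) := H(x·P + (1−x)·R | R)` is finite at every `x ∈ [0,1]`, convex, continuous
on `[0,1]`, and nondecreasing. -/
theorem relEntropy_convexCombination_convex_continuous_monotone {Ω : Type*}
    [MeasurableSpace Ω] (P R : Measure Ω)
    [IsProbabilityMeasure P] [IsProbabilityMeasure R] (hH : relEntropy P R < ⊤) :
    (∀ x ∈ Set.Icc (0 : ℝ) 1,
      relEntropy (ENNReal.ofReal x • P + ENNReal.ofReal (1 - x) • R) R ≠ ⊤) ∧
    ConvexOn ℝ (Set.Icc (0 : ℝ) 1) (fun x : ℝ =>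
      (relEntropy (ENNReal.ofReal x • P + ENNReal.ofReal (1 - x) • R) R).toReal) ∧
    ContinuousOn (fun x : ℝ =>
      (relEntropy (ENNReal.ofReal x • P + ENNReal.ofReal (1 - x) • R) R).toReal)
      (Set.Icc (0 : ℝ) 1) ∧
    MonotoneOn (fun x : ℝ =>
      (relEntropy (ENNReal.ofReal x • P + ENNReal.ofReal (1 - x) • R) R).toReal)
      (Set.Icc (0 : ℝ) 1) := by
  obtain ⟨hPR, hllr⟩ := relEntropy_ne_top_iff.1 hH.ne
  set g : Ω → ℝ := fun ω ↦ (P.rnDeriv R ω).toReal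
  have hg : Measurable g := by fun_prop
  have hg0 : 0 ≤ g := fun _ ↦ ENNReal.toReal_nonneg
  have hint : Integrable (fun ω ↦ klFun (g ω)) R := (integrable_klFun_rnDeriv_iff hPR).2 hllr
  have heq : EqOn (integralKlFunMixture R g) (fun x ↦ (relEntropy (mixture x P R) R).toReal)
      (Icc 0 1) := fun x hx ↦ (toReal_relEntropy_mixture hPR hx).symm
  exact ⟨fun x hx ↦ relEntropy_mixture_ne_top hPR hint hx,
    (convexOn_integralKlFunMixture hg hg0 hint).congr heq,
    (continuousOn_integralKlFunMixture hg hg0 hint).congr heq.symm,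
    (monotoneOn_integralKlFunMixture hg hg0 hint).congr heq⟩
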